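/- Let c > 0, j ∈ ℤ/nℤ with j ≠ 0, and x, y in the closed Weyl chamber C̄. Define Ã_j = ∑_{k∈ℤ/nℤ} c·σ_k/D_{s_k} − ∑_{k∈ℤ/nℤ, k≠j} c·ρ_k/D_{r_k} and B̃_j = (D_{r_j}·D_S/D_R − 1)·𝔇_S. Then Ã_j = c·ρ_j/D_{r_j} + (c^n·𝔖/D_S)·𝔇_R, B̃_j = c·ρ_j·𝔇_R + (c^n·𝔖/D_S)·𝔇_R, and 1 ≤ 𝔇_R ≤ n. -/

import Mathlib

/-!
Identify `ℝ²` with `ℂ` and put `ζ = exp (2πi/n)`. Then `ρ_k = re (x̄ y) - re (W ζ ^ k)`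
and `σ_k = re (x̄ y) - re (W' ζ ^ k)` with `W = x̄ y` and `W' = -x y`. Factoring each
`2T (s - re (W ζ ^ k)) = (T - W ζ ^ k) (T - conj (W ζ ^ k))` over a root `T` of
`T ^ 2 - 2 s T + |W| ^ 2` shows that `∏ₖ (s - re (W ζ ^ k))` depends on `W` only through
`|W|`, up to the additive term `-2 ^ (1 - n) re (W ^ n)`. As `|W| = |W'|`, the polynomials
`∏ₖ (t + c σ_k)` and `∏ₖ (t + c ρ_k)` differ by a constant, which is `∏ₖ c σ_k` since
`ρ_0 = 0`. At `t = 1` this is `D_S = D_R + c ^ n 𝔖`, and its derivative at `t = 1` is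
`D_S 𝔇_S = D_R 𝔇_R`; the two identities follow from these by algebra. The bounds on `𝔇_R`
come from `ρ_0 = 0` and `ρ_k ≥ 0` on the chamber, which by bilinearity only has to be checked
on the two edges of the chamber.
-/

open Real Finset

noncomputable section

/-- The Euclidean inner product on `ℝ × ℝ`. -/
def dot2 (x y : ℝ × ℝ) : ℝ := x.1 * y.1 + x.2 * y.2

/-- The positive root `α_j = (cos (πj/n), sin (πj/n))` of the dihedral system `I_n`. -/
def alphaRoot (n : ℕ) (j : ℤ) : ℝ × ℝ :=
  (Real.cos (Real.pi * j / n), Real.sin (Real.pi * j / n))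

/-- The rotation `r_j` of `ℝ²` about the origin by angle `2πj/n`. -/
def rotMap (n : ℕ) (j : ℤ) (v : ℝ × ℝ) : ℝ × ℝ :=
  (Real.cos (2 * Real.pi * j / n) * v.1 - Real.sin (2 * Real.pi * j / n) * v.2,
   Real.sin (2 * Real.pi * j / n) * v.1 + Real.cos (2 * Real.pi * j / n) * v.2)

/-- The reflection `s_j` of `ℝ²`, with matrix
`[[−cos(2πj/n), sin(2πj/n)], [sin(2πj/n), cos(2πj/n)]]`. -/
def reflMap (n : ℕ) (j : ℤ) (v : ℝ × ℝ) : ℝ × ℝ :=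
  (-Real.cos (2 * Real.pi * j / n) * v.1 + Real.sin (2 * Real.pi * j / n) * v.2,
   Real.sin (2 * Real.pi * j / n) * v.1 + Real.cos (2 * Real.pi * j / n) * v.2)

/-- `ρ_j(x,y) = ⟨x, y − r_j.y⟩`. -/
def rhoJ (n : ℕ) (j : ℤ) (x y : ℝ × ℝ) : ℝ := dot2 x (y - rotMap n j y)

/-- `σ_j(x,y) = ⟨x, y − s_j.y⟩`. -/
def sigmaJ (n : ℕ) (j : ℤ) (x y : ℝ × ℝ) : ℝ := dot2 x (y - reflMap n j y)

/-- The closed Weyl chamber `C̄ = {x : ⟨α_0,x⟩ ≥ 0 and ⟨α_{n−1},x⟩ ≥ 0}`. -/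
def chamber (n : ℕ) : Set (ℝ × ℝ) :=
  {x | 0 ≤ dot2 (alphaRoot n 0) x ∧ 0 ≤ dot2 (alphaRoot n ((n : ℤ) - 1)) x}

/-- The rotation `r̃` about the origin by angle `π/2 − π/n`. -/
def rtilde (n : ℕ) (v : ℝ × ℝ) : ℝ × ℝ :=
  (Real.sin (Real.pi / n) * v.1 - Real.cos (Real.pi / n) * v.2,
   Real.cos (Real.pi / n) * v.1 + Real.sin (Real.pi / n) * v.2)

open ComplexConjugate

namespace IsPrimitiveRoot

variable {n : ℕ} {ζ : ℂ}

theorem prod_range_sub_mul_pow (hζ : IsPrimitiveRoot ζ n) (hn : 0 < n) (T W : ℂ) :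
    ∏ k ∈ range n, (T - W * ζ ^ k) = T ^ n - W ^ n := by
  have h := congrArg (Polynomial.eval T) (X_pow_sub_C_eq_prod hζ hn (rfl : W ^ n = W ^ n))
  simp only [Polynomial.eval_sub, Polynomial.eval_pow, Polynomial.eval_X, Polynomial.eval_C,
    Polynomial.eval_prod] at h
  rw [h]
  exact prod_congr rfl fun k _ => by ring

theorem two_mul_pow_mul_prod_sub_re (hζ : IsPrimitiveRoot ζ n) (hn : 0 < n) (s : ℝ) (W T : ℂ)
    (hT : T ^ 2 - 2 * s * T + Complex.normSq W = 0) :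
    (2 * T) ^ n * ((∏ k ∈ range n, (s - (W * ζ ^ k).re) : ℝ) : ℂ)
      = (T ^ n - W ^ n) * (T ^ n - conj W ^ n) := by
  have hζc : ζ * conj ζ = 1 := by
    rw [Complex.mul_conj, Complex.normSq_eq_norm_sq, hζ.norm'_eq_one hn.ne']
    simp
  have hfactor : ∀ k ∈ range n, (2 * T) * ((s : ℂ) - ((W * ζ ^ k).re : ℂ)) =
      (T - W * ζ ^ k) * (T - conj W * conj ζ ^ k) := fun k _ => by
    have hre : (((W * ζ ^ k).re : ℝ) : ℂ) = (W * ζ ^ k + conj (W * ζ ^ k)) / 2 := by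
      rw [Complex.add_conj]; push_cast; ring
    have hpow : ζ ^ k * conj ζ ^ k = 1 := by rw [← mul_pow, hζc, one_pow]
    rw [hre, map_mul, map_pow]
    linear_combination (-1 : ℂ) * hT - (W * conj W) * hpow - Complex.mul_conj W
  push_cast
  rw [← card_range n, ← prod_const, card_range, ← prod_mul_distrib, prod_congr rfl hfactor,
    prod_mul_distrib, hζ.prod_range_sub_mul_pow hn,
    (hζ.map_of_injective (starRingEnd ℂ).injective).prod_range_sub_mul_pow hn]

theorem two_pow_mul_prod_sub_re_sub_prod (hζ : IsPrimitiveRoot ζ n) (hn : 0 < n) (s : ℝ)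
    {W W' : ℂ} (hW : Complex.normSq W = Complex.normSq W') :
    2 ^ n * (∏ k ∈ range n, (s - (W * ζ ^ k).re) - ∏ k ∈ range n, (s - (W' * ζ ^ k).re))
      = 2 * ((W' ^ n).re - (W ^ n).re) := by
  by_cases hW0 : W = 0
  · have hW'0 : W' = 0 := by rwa [hW0, Complex.normSq_zero, eq_comm, Complex.normSq_eq_zero] at hW
    simp [hW0, hW'0, zero_pow hn.ne']
  obtain ⟨R, hR⟩ := IsAlgClosed.exists_pow_nat_eq ((s : ℂ) ^ 2 - Complex.normSq W) two_pos
  have hT : (s + R) ^ 2 - 2 * s * (s + R) + Complex.normSq W = 0 := by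
    linear_combination hR
  have hT0 : (s + R) ^ n ≠ 0 := by
    refine pow_ne_zero _ fun h => hW0 ?_
    rw [h] at hT
    exact_mod_cast Complex.normSq_eq_zero.1 (by simpa using hT)
  have e := hζ.two_mul_pow_mul_prod_sub_re hn s W _ hT
  have e' := hζ.two_mul_pow_mul_prod_sub_re hn s W' _ (hW ▸ hT)
  have hre : ∀ V : ℂ, V ^ n + conj V ^ n = 2 * ((V ^ n).re : ℂ) := fun V => by
    rw [← map_pow, Complex.add_conj]; push_cast; ring
  have hnorm : ∀ V : ℂ, V ^ n * conj V ^ n = (Complex.normSq V : ℂ) ^ n := fun V => by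
    rw [← mul_pow, Complex.mul_conj]
  have hnorm' := hnorm W'
  rw [← hW] at hnorm'
  apply Complex.ofReal_injective
  apply mul_left_cancel₀ hT0
  rw [mul_pow] at e e'
  push_cast at e e' ⊢
  linear_combination e - e' + (s + R) ^ n * (hre W' - hre W) + hnorm W - hnorm'

end IsPrimitiveRoot

theorem Complex.exp_two_pi_mul_I_div_pow (n k : ℕ) :
    Complex.exp (2 * π * Complex.I / n) ^ k
      = (Real.cos (2 * π * k / n) : ℂ) + (Real.sin (2 * π * k / n) : ℂ) * Complex.I := by
  rw [← Complex.exp_nat_mul, Complex.ofReal_cos, Complex.ofReal_sin, ← Complex.exp_mul_I]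
  push_cast
  ring_nf

section ComplexForm

variable (n k : ℕ) (x y : ℝ × ℝ)

local notation "ζ" => Complex.exp (2 * π * Complex.I / n)

/-- In complex coordinates `r_k v = ζ ^ k v` and `s_k v = -conj (ζ ^ k v)`. -/
theorem rhoJ_eq_re : rhoJ n k x y = (conj ⟨x.1, x.2⟩ * ⟨y.1, y.2⟩ : ℂ).re
    - (conj ⟨x.1, x.2⟩ * ⟨y.1, y.2⟩ * ζ ^ k : ℂ).re := by
  rw [Complex.exp_two_pi_mul_I_div_pow]
  simp only [rhoJ, dot2, rotMap, Prod.fst_sub, Prod.snd_sub, Complex.mul_re, Complex.mul_im,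
    Complex.add_re, Complex.add_im, Complex.conj_re, Complex.conj_im, Complex.ofReal_re,
    Complex.ofReal_im, Complex.I_re, Complex.I_im, Int.cast_natCast]
  ring

theorem sigmaJ_eq_re : sigmaJ n k x y = (conj ⟨x.1, x.2⟩ * ⟨y.1, y.2⟩ : ℂ).re
    - (-(⟨x.1, x.2⟩ * ⟨y.1, y.2⟩) * ζ ^ k : ℂ).re := by
  rw [Complex.exp_two_pi_mul_I_div_pow]
  simp only [sigmaJ, dot2, reflMap, Prod.fst_sub, Prod.snd_sub, Complex.mul_re, Complex.mul_im,
    Complex.add_re, Complex.add_im, Complex.neg_re, Complex.neg_im, Complex.conj_re,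
    Complex.conj_im, Complex.ofReal_re, Complex.ofReal_im, Complex.I_re, Complex.I_im,
    Int.cast_natCast]
  ring

end ComplexForm

theorem rhoJ_zero (n : ℕ) (x y : ℝ × ℝ) : rhoJ n 0 x y = 0 := by
  simp [rhoJ, dot2, rotMap]

theorem prod_add_mul_sigmaJ {n : ℕ} (hn : 0 < n) (c : ℝ) (x y : ℝ × ℝ) (t : ℝ) :
    ∏ k ∈ range n, (t + c * sigmaJ n k x y)
      = ∏ k ∈ range n, (t + c * rhoJ n k x y) + ∏ k ∈ range n, c * sigmaJ n k x y := by
  set X : ℂ := ⟨x.1, x.2⟩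
  set Y : ℂ := ⟨y.1, y.2⟩
  set ζ := Complex.exp (2 * π * Complex.I / n)
  have hζ : IsPrimitiveRoot ζ n := Complex.isPrimitiveRoot_exp n hn.ne'
  have hW : Complex.normSq (c * (conj X * Y)) = Complex.normSq (c * -(X * Y)) := by
    simp only [Complex.normSq_mul, Complex.normSq_neg, Complex.normSq_conj]
  have hdiff : ∀ t : ℝ, 2 ^ n * (∏ k ∈ range n, (t + c * sigmaJ n k x y)
      - ∏ k ∈ range n, (t + c * rhoJ n k x y))
        = 2 * (((c * (conj X * Y)) ^ n).re - ((c * -(X * Y)) ^ n).re) := fun t => by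
    rw [← hζ.two_pow_mul_prod_sub_re_sub_prod hn (t + c * (conj X * Y)).re hW.symm]
    congr 2 <;> refine prod_congr rfl fun k _ => ?_
    · rw [sigmaJ_eq_re, mul_assoc (c : ℂ)]
      simp only [Complex.add_re, Complex.ofReal_re, Complex.re_ofReal_mul]
      ring
    · rw [rhoJ_eq_re, mul_assoc (c : ℂ)]
      simp only [Complex.add_re, Complex.ofReal_re, Complex.re_ofReal_mul]
      ring
  have hρ : ∏ k ∈ range n, c * rhoJ n k x y = 0 :=
    prod_eq_zero (mem_range.2 hn) (by rw [Nat.cast_zero, rhoJ_zero, mul_zero])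
  have h0 := hdiff 0
  simp only [zero_add, hρ, sub_zero] at h0
  rw [← h0] at hdiff
  linarith [mul_left_cancel₀ (pow_ne_zero n two_ne_zero) (hdiff t)]

theorem Real.cos_le_cos_of_le_of_le_two_pi_sub {a ψ : ℝ} (ha : 0 ≤ a) (h₁ : a ≤ ψ)
    (h₂ : ψ ≤ 2 * π - a) : cos ψ ≤ cos a := by
  rcases le_total ψ π with hψ | hψ
  · exact cos_le_cos_of_nonneg_of_le_pi ha hψ h₁
  · rw [← cos_two_pi_sub]
    exact cos_le_cos_of_nonneg_of_le_pi ha (by linarith) (by linarith)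

section Chamber

variable {n : ℕ}

theorem cos_two_pi_mul_div_add_pi_div_le {k : ℕ} (hk : k < n) :
    cos (2 * π * k / n + π / n) ≤ cos (π / n) := by
  have hn : (0 : ℝ) < n := by exact_mod_cast hk.pos
  have hk' : (k : ℝ) + 1 ≤ n := by exact_mod_cast hk
  have hq : 0 ≤ π / n := by positivity
  have hπ : π = n * (π / n) := by field_simp
  rw [show 2 * π * k / n = 2 * k * (π / n) by ring]
  refine cos_le_cos_of_le_of_le_two_pi_sub hq (by nlinarith) ?_
  nlinarith [mul_le_mul_of_nonneg_right hk' hq]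

theorem cos_two_pi_mul_div_sub_pi_div_le {k : ℕ} (hk : k < n) :
    cos (2 * π * k / n - π / n) ≤ cos (π / n) := by
  rcases Nat.eq_zero_or_pos k with rfl | hk0
  · simp
  have hn : (0 : ℝ) < n := by exact_mod_cast hk.pos
  have hk' : (k : ℝ) + 1 ≤ n := by exact_mod_cast hk
  have hk1 : (1 : ℝ) ≤ k := by exact_mod_cast hk0
  have hq : 0 ≤ π / n := by positivity
  have hπ : π = n * (π / n) := by field_simp
  rw [show 2 * π * k / n = 2 * k * (π / n) by ring]
  refine cos_le_cos_of_le_of_le_two_pi_sub hq (by nlinarith) ?_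
  nlinarith [mul_le_mul_of_nonneg_right hk' hq]

theorem exists_eq_of_mem_chamber (hn : 2 ≤ n) {x : ℝ × ℝ} (hx : x ∈ chamber n) :
    ∃ a b : ℝ, 0 ≤ a ∧ 0 ≤ b ∧ x = (b * sin (π / n), a + b * cos (π / n)) := by
  obtain ⟨h₀, h₁⟩ := hx
  have hs : 0 < sin (π / n) := by
    apply sin_pos_of_pos_of_lt_pi (by positivity)
    rw [div_lt_iff₀ (by positivity)]
    have : (1 : ℝ) < n := by exact_mod_cast hn
    nlinarith [pi_pos]
  have e : π * (((n : ℤ) - 1 : ℤ) : ℝ) / n = π - π / n := by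
    push_cast
    field_simp
  simp only [dot2, alphaRoot, Int.cast_zero, mul_zero, zero_div, cos_zero, sin_zero, one_mul,
    zero_mul, add_zero, e, cos_pi_sub, sin_pi_sub] at h₀ h₁
  refine ⟨x.2 - x.1 * cos (π / n) / sin (π / n), x.1 / sin (π / n), ?_, by positivity, ?_⟩
  · rw [sub_nonneg, div_le_iff₀ hs]
    linarith
  · ext
    · field_simp
    · field_simp
      ring

theorem rhoJ_nonneg (hn : 2 ≤ n) {k : ℕ} (hk : k < n) {x y : ℝ × ℝ}
    (hx : x ∈ chamber n) (hy : y ∈ chamber n) : 0 ≤ rhoJ n k x y := by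
  obtain ⟨a, b, ha, hb, rfl⟩ := exists_eq_of_mem_chamber hn hx
  obtain ⟨a', b', ha', hb', rfl⟩ := exists_eq_of_mem_chamber hn hy
  set θ := 2 * π * k / n
  have hexpand : rhoJ n k (b * sin (π / n), a + b * cos (π / n))
        (b' * sin (π / n), a' + b' * cos (π / n))
      = (a * a' + b * b') * (1 - cos θ) + a * b' * (cos (π / n) - cos (θ - π / n))
        + a' * b * (cos (π / n) - cos (θ + π / n)) := by
    simp only [rhoJ, dot2, rotMap, Prod.fst_sub, Prod.snd_sub, Int.cast_natCast, cos_sub, cos_add]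
    linear_combination b * b' * (1 - cos θ) * sin_sq_add_cos_sq (π / n)
  have h₁ := sub_nonneg.2 (cos_two_pi_mul_div_sub_pi_div_le hk)
  have h₂ := sub_nonneg.2 (cos_two_pi_mul_div_add_pi_div_le hk)
  have h₃ := sub_nonneg.2 (cos_le_one θ)
  rw [hexpand]
  positivity

theorem sigmaJ_nonneg (hn : 2 ≤ n) {k : ℕ} (hk : k < n) {x y : ℝ × ℝ}
    (hx : x ∈ chamber n) (hy : y ∈ chamber n) : 0 ≤ sigmaJ n k x y := by
  obtain ⟨a, b, ha, hb, rfl⟩ := exists_eq_of_mem_chamber hn hx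
  obtain ⟨a', b', ha', hb', rfl⟩ := exists_eq_of_mem_chamber hn hy
  set θ := 2 * π * k / n
  have hexpand : sigmaJ n k (b * sin (π / n), a + b * cos (π / n))
        (b' * sin (π / n), a' + b' * cos (π / n))
      = a * a' * (1 - cos θ) + (a * b' + a' * b) * (cos (π / n) - cos (θ - π / n))
        + b * b' * (1 - cos (θ - 2 * (π / n))) := by
    simp only [sigmaJ, dot2, reflMap, Prod.fst_sub, Prod.snd_sub, Int.cast_natCast, cos_sub,
      cos_two_mul, sin_two_mul]
    linear_combination b * b' * (1 + cos θ) * sin_sq_add_cos_sq (π / n)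
  have h₁ := sub_nonneg.2 (cos_two_pi_mul_div_sub_pi_div_le hk)
  have h₂ := sub_nonneg.2 (cos_le_one θ)
  have h₃ := sub_nonneg.2 (cos_le_one (θ - 2 * (π / n)))
  rw [hexpand]
  positivity

end Chamber

section Barrier

variable {ι : Type*} {s : Finset ι} {a b : ι → ℝ}

theorem sum_div_one_add_eq_card_sub (h : ∀ i ∈ s, 1 + a i ≠ 0) :
    ∑ i ∈ s, a i / (1 + a i) = #s - ∑ i ∈ s, 1 / (1 + a i) := by
  rw [← nsmul_one, ← sum_const, ← sum_sub_distrib]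
  refine sum_congr rfl fun i hi => ?_
  field_simp [h i hi]
  ring

theorem prod_mul_sum_one_div [DecidableEq ι] {f : ι → ℝ} (h : ∀ i ∈ s, f i ≠ 0) :
    (∏ i ∈ s, f i) * ∑ i ∈ s, 1 / f i = ∑ i ∈ s, ∏ l ∈ s.erase i, f l := by
  rw [mul_sum]
  refine sum_congr rfl fun i hi => ?_
  rw [← mul_prod_erase s f hi]
  field_simp [h i hi]

theorem prod_mul_sum_one_div_eq_of_prod_add_eq {C : ℝ}
    (h : ∀ t, ∏ i ∈ s, (t + a i) = ∏ i ∈ s, (t + b i) + C) (t : ℝ)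
    (ha : ∀ i ∈ s, t + a i ≠ 0) (hb : ∀ i ∈ s, t + b i ≠ 0) :
    (∏ i ∈ s, (t + a i)) * ∑ i ∈ s, 1 / (t + a i)
      = (∏ i ∈ s, (t + b i)) * ∑ i ∈ s, 1 / (t + b i) := by
  classical
  rw [prod_mul_sum_one_div ha, prod_mul_sum_one_div hb]
  have hderiv : ∀ c : ι → ℝ, HasDerivAt (fun t => ∏ i ∈ s, (t + c i))
      (∑ i ∈ s, ∏ l ∈ s.erase i, (t + c l)) t := fun c => by
    simpa using HasDerivAt.fun_finsetProd (u := s) (f' := fun _ => 1)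
      fun i _ => (hasDerivAt_id t).add_const (c i)
  have hb' := (hderiv b).add_const C
  rw [← funext h] at hb'
  exact (hderiv a).unique hb'

theorem sum_one_div_sub_sum_one_div_eq
    (hprod : ∏ i ∈ s, (1 + a i) = ∏ i ∈ s, (1 + b i) + ∏ i ∈ s, a i)
    (hlog : (∏ i ∈ s, (1 + a i)) * ∑ i ∈ s, 1 / (1 + a i)
      = (∏ i ∈ s, (1 + b i)) * ∑ i ∈ s, 1 / (1 + b i))
    (ha : ∀ i ∈ s, 1 + a i ≠ 0) :
    ∑ i ∈ s, 1 / (1 + b i) - ∑ i ∈ s, 1 / (1 + a i)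
      = (∏ i ∈ s, a i) / (∏ i ∈ s, (1 + a i)) * ∑ i ∈ s, 1 / (1 + b i) := by
  rw [div_mul_eq_mul_div, eq_div_iff (prod_ne_zero_iff.2 ha)]
  linear_combination (∑ i ∈ s, 1 / (1 + b i)) * hprod - hlog

theorem one_le_sum_one_div_one_add (ha : ∀ i ∈ s, 0 ≤ a i) {i : ι} (hi : i ∈ s)
    (hi0 : a i = 0) : 1 ≤ ∑ i ∈ s, 1 / (1 + a i) := by
  refine le_of_eq_of_le ?_ (single_le_sum (fun k hk => ?_) hi)
  · simp [hi0]
  · have := ha k hk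
    positivity

theorem sum_one_div_one_add_le_card (ha : ∀ i ∈ s, 0 ≤ a i) :
    ∑ i ∈ s, 1 / (1 + a i) ≤ #s := by
  rw [← nsmul_one, ← sum_const]
  refine sum_le_sum fun i hi => ?_
  rw [div_le_one (by linarith [ha i hi])]
  linarith [ha i hi]

end Barrier

theorem barrier_tilde_eq_general (n : ℕ) (hn : 3 ≤ n) (c : ℝ) (hc : 0 < c)
    (j : ℕ) (hj : j < n)
    (x : ℝ × ℝ) (hx : x ∈ chamber n) (y : ℝ × ℝ) (hy : y ∈ chamber n) :
    (∑ k ∈ Finset.range n, c * sigmaJ n k x y / (1 + c * sigmaJ n k x y))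
        - (∑ k ∈ (Finset.range n).erase j, c * rhoJ n k x y / (1 + c * rhoJ n k x y))
      = c * rhoJ n j x y / (1 + c * rhoJ n j x y)
        + c ^ n * (∏ k ∈ Finset.range n, sigmaJ n k x y) /
            (∏ k ∈ Finset.range n, (1 + c * sigmaJ n k x y)) *
          ∑ k ∈ Finset.range n, 1 / (1 + c * rhoJ n k x y) ∧
    ((1 + c * rhoJ n j x y) * (∏ k ∈ Finset.range n, (1 + c * sigmaJ n k x y)) /
          (∏ k ∈ Finset.range n, (1 + c * rhoJ n k x y)) - 1) *
        (∑ k ∈ Finset.range n, 1 / (1 + c * sigmaJ n k x y))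
      = c * rhoJ n j x y * (∑ k ∈ Finset.range n, 1 / (1 + c * rhoJ n k x y))
        + c ^ n * (∏ k ∈ Finset.range n, sigmaJ n k x y) /
            (∏ k ∈ Finset.range n, (1 + c * sigmaJ n k x y)) *
          ∑ k ∈ Finset.range n, 1 / (1 + c * rhoJ n k x y) ∧
    1 ≤ (∑ k ∈ Finset.range n, 1 / (1 + c * rhoJ n k x y)) ∧
    (∑ k ∈ Finset.range n, 1 / (1 + c * rhoJ n k x y)) ≤ (n : ℝ) := by
  have hρ : ∀ k ∈ range n, 0 ≤ c * rhoJ n k x y := fun k hk =>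
    mul_nonneg hc.le (rhoJ_nonneg (by omega) (mem_range.1 hk) hx hy)
  have hσ : ∀ k ∈ range n, 0 ≤ c * sigmaJ n k x y := fun k hk =>
    mul_nonneg hc.le (sigmaJ_nonneg (by omega) (mem_range.1 hk) hx hy)
  have hR : ∀ k ∈ range n, 1 + c * rhoJ n k x y ≠ 0 := fun k hk => by linarith [hρ k hk]
  have hS : ∀ k ∈ range n, 1 + c * sigmaJ n k x y ≠ 0 := fun k hk => by linarith [hσ k hk]
  have hprod := prod_add_mul_sigmaJ (by omega : 0 < n) c x y
  have hlog := prod_mul_sum_one_div_eq_of_prod_add_eq hprod 1 hS hR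
  have hdiff := sum_one_div_sub_sum_one_div_eq (hprod 1) hlog hS
  have hDR : ∏ k ∈ range n, (1 + c * rhoJ n k x y) ≠ 0 := prod_ne_zero_iff.2 hR
  have hP : c ^ n * ∏ k ∈ range n, sigmaJ n k x y = ∏ k ∈ range n, c * sigmaJ n k x y := by
    rw [prod_mul_distrib, prod_const, card_range]
  rw [hP]
  refine ⟨?_, ?_, one_le_sum_one_div_one_add hρ (mem_range.2 (by omega : 0 < n))
    (by rw [Nat.cast_zero, rhoJ_zero, mul_zero]), by simpa using sum_one_div_one_add_le_card hρ⟩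
  · rw [sum_div_one_add_eq_card_sub hS, sum_erase_eq_sub (mem_range.2 hj),
      sum_div_one_add_eq_card_sub hR]
    linear_combination hdiff
  · rw [← hdiff, sub_mul, div_mul_eq_mul_div, mul_assoc, hlog, mul_div_assoc,
      mul_div_cancel_left₀ _ hDR]
    ring

/-- For `c > 0`, `j ≠ 0` and `x, y` in the closed Weyl chamber:
`Ã_j = ∑_k cσ_k/D_{s_k} − ∑_{k≠j} cρ_k/D_{r_k} = cρ_j/D_{r_j} + (c^n 𝔖/D_S) 𝔇_R`,
`B̃_j = (D_{r_j} D_S/D_R − 1) 𝔇_S = cρ_j 𝔇_R + (c^n 𝔖/D_S) 𝔇_R`, and `1 ≤ 𝔇_R ≤ n`. -/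
theorem barrier_tilde_eq (n : ℕ) (hn : 3 ≤ n) (c : ℝ) (hc : 0 < c)
    (j : ℕ) (hj0 : j ≠ 0) (hj : j < n)
    (x : ℝ × ℝ) (hx : x ∈ chamber n) (y : ℝ × ℝ) (hy : y ∈ chamber n) :
    (∑ k ∈ Finset.range n, c * sigmaJ n k x y / (1 + c * sigmaJ n k x y))
        - (∑ k ∈ (Finset.range n).erase j, c * rhoJ n k x y / (1 + c * rhoJ n k x y))
      = c * rhoJ n j x y / (1 + c * rhoJ n j x y)
        + c ^ n * (∏ k ∈ Finset.range n, sigmaJ n k x y) /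
            (∏ k ∈ Finset.range n, (1 + c * sigmaJ n k x y)) *
          ∑ k ∈ Finset.range n, 1 / (1 + c * rhoJ n k x y) ∧
    ((1 + c * rhoJ n j x y) * (∏ k ∈ Finset.range n, (1 + c * sigmaJ n k x y)) /
          (∏ k ∈ Finset.range n, (1 + c * rhoJ n k x y)) - 1) *
        (∑ k ∈ Finset.range n, 1 / (1 + c * sigmaJ n k x y))
      = c * rhoJ n j x y * (∑ k ∈ Finset.range n, 1 / (1 + c * rhoJ n k x y))
        + c ^ n * (∏ k ∈ Finset.range n, sigmaJ n k x y) /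
            (∏ k ∈ Finset.range n, (1 + c * sigmaJ n k x y)) *
          ∑ k ∈ Finset.range n, 1 / (1 + c * rhoJ n k x y) ∧
    1 ≤ (∑ k ∈ Finset.range n, 1 / (1 + c * rhoJ n k x y)) ∧
    (∑ k ∈ Finset.range n, 1 / (1 + c * rhoJ n k x y)) ≤ (n : ℝ) :=
  barrier_tilde_eq_general n hn c hc j hj x hx y hy
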